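/- Fix p > 2 and define f(x) = |x|·p^{1/p}·|ln|x||^{1/p} for 0 < |x| ≤ e^{-2} and f(0) = 0. Define N(s) = -s·ln(s) for 0 < s ≤ e^{-2} and N(0)=0. Then for all x, y ∈ [0, e^{-2}], |f(x) - f(y)|^p ≤ N(|x - y|^p). -/

import Mathlib

/-!
On `[0, 1]` one has `f t = negMulLog (t ^ p) ^ (1 / p) = p ^ (1 / p) * (t * (-log t) ^ (1 / p))`.
The first form shows that `f` is monotone on `[0, exp (-1 / p)]`, because `negMulLog` increases
on `[0, exp (-1)]`. The second shows `f a - f b ≤ f (a - b)` for `b ≤ a`, because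
`t ↦ (-log t) ^ (1 / p)` decreases. Together they give `|f x - f y| ≤ f |x - y|`, and the
`p`-th power of the right side is `negMulLog (|x - y| ^ p)`.
-/

open Real Set

lemma mul_sub_mul_le_sub_mul_of_antitoneOn {L : ℝ → ℝ} {r a b : ℝ} (hL : AntitoneOn L (Ioc 0 r))
    (hb : 0 ≤ b) (hba : b ≤ a) (ha : a ≤ r) :
    a * L a - b * L b ≤ (a - b) * L (a - b) := by
  rcases hb.eq_or_lt with rfl | hb
  · simp
  rcases hba.eq_or_lt with rfl | hba
  · simp
  have hd : 0 < a - b := sub_pos.2 hba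
  have hLb : L a ≤ L b := hL ⟨hb, hba.le.trans ha⟩ ⟨hb.trans hba, ha⟩ hba.le
  have hLd : L a ≤ L (a - b) := hL ⟨hd, by linarith⟩ ⟨hb.trans hba, ha⟩ (by linarith)
  calc a * L a - b * L b = (a - b) * L a + b * (L a - L b) := by ring
    _ ≤ (a - b) * L a := by nlinarith
    _ ≤ (a - b) * L (a - b) := mul_le_mul_of_nonneg_left hLd hd.le

lemma abs_sub_le_of_monotoneOn_of_sub_le {g : ℝ → ℝ} {s : Set ℝ} (hmono : MonotoneOn g s)
    (hsub : ∀ a ∈ s, ∀ b ∈ s, b ≤ a → g a - g b ≤ g (a - b)) {x y : ℝ} (hx : x ∈ s)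
    (hy : y ∈ s) : |g x - g y| ≤ g |x - y| := by
  rcases le_total y x with h | h
  · rw [abs_of_nonneg (sub_nonneg.2 (hmono hy hx h)), abs_of_nonneg (sub_nonneg.2 h)]
    exact hsub x hx y hy h
  · rw [abs_sub_comm, abs_sub_comm x, abs_of_nonneg (sub_nonneg.2 (hmono hx hy h)),
      abs_of_nonneg (sub_nonneg.2 h)]
    exact hsub y hy x hx h

lemma antitoneOn_rpow_neg_log {q : ℝ} (hq : 0 ≤ q) :
    AntitoneOn (fun t => (-log t) ^ q) (Ioc 0 1) := fun _ hs _ ht hst =>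
  rpow_le_rpow (neg_nonneg.2 (log_nonpos ht.1.le ht.2)) (neg_le_neg (log_le_log hs.1 hst)) hq

lemma monotoneOn_negMulLog : MonotoneOn negMulLog (Icc 0 (exp (-1))) := by
  refine monotoneOn_of_deriv_nonneg (convex_Icc _ _) continuous_negMulLog.continuousOn
    (differentiableOn_negMulLog.mono ?_) fun x hx => ?_
  · rw [interior_Icc]
    exact fun x hx => hx.1.ne'
  · rw [interior_Icc] at hx
    have hlog : log x ≤ -1 := by simpa using log_le_log hx.1 hx.2.le
    rw [deriv_negMulLog hx.1.ne']
    linarith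

lemma negMulLog_rpow_rpow_one_div {p t : ℝ} (hp : 0 < p) (ht₀ : 0 ≤ t) (ht₁ : t ≤ 1) :
    negMulLog (t ^ p) ^ (1 / p) = p ^ (1 / p) * (t * (-log t) ^ (1 / p)) := by
  rcases ht₀.eq_or_lt with rfl | ht₀
  · simp [zero_rpow hp.ne', zero_rpow (inv_pos.2 hp).ne']
  have hlog : 0 ≤ -log t := neg_nonneg.2 (log_nonpos ht₀.le ht₁)
  rw [negMulLog, log_rpow ht₀, show -t ^ p * (p * log t) = p * (t ^ p * -log t) by ring,
    mul_rpow hp.le (by positivity), mul_rpow (by positivity) hlog, one_div,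
    rpow_rpow_inv ht₀.le hp.ne']

lemma monotoneOn_negMulLog_rpow_rpow_one_div {p : ℝ} (hp : 0 < p) :
    MonotoneOn (fun t => negMulLog (t ^ p) ^ (1 / p)) (Icc 0 (exp (-1 / p))) := by
  have hmaps : MapsTo (· ^ p) (Icc 0 (exp (-1 / p))) (Icc 0 (exp (-1))) := fun t ht =>
    ⟨rpow_nonneg ht.1 p, calc
      t ^ p ≤ exp (-1 / p) ^ p := rpow_le_rpow ht.1 ht.2 hp.le
      _ = exp (-1) := by rw [← exp_mul, div_mul_cancel₀ _ hp.ne']⟩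
  intro s hs t ht hst
  have hs' := hmaps hs
  exact rpow_le_rpow (negMulLog_nonneg hs'.1 (hs'.2.trans (exp_le_one_iff.2 (by norm_num))))
    (monotoneOn_negMulLog hs' (hmaps ht) (rpow_le_rpow hs.1 hst hp.le)) (by positivity)

lemma negMulLog_rpow_rpow_one_div_sub_le {p a b : ℝ} (hp : 0 < p) (hb : 0 ≤ b) (hba : b ≤ a)
    (ha : a ≤ 1) :
    negMulLog (a ^ p) ^ (1 / p) - negMulLog (b ^ p) ^ (1 / p) ≤
      negMulLog ((a - b) ^ p) ^ (1 / p) := by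
  rw [negMulLog_rpow_rpow_one_div hp (hb.trans hba) ha, negMulLog_rpow_rpow_one_div hp hb
    (hba.trans ha), negMulLog_rpow_rpow_one_div hp (sub_nonneg.2 hba) (by linarith), ← mul_sub]
  exact mul_le_mul_of_nonneg_left (mul_sub_mul_le_sub_mul_of_antitoneOn
    (antitoneOn_rpow_neg_log (one_div_pos.2 hp).le) hb hba ha) (by positivity)

lemma exp_neg_one_div_le_one {p : ℝ} (hp : 0 < p) : exp (-1 / p) ≤ 1 :=
  exp_le_one_iff.2 (div_nonpos_of_nonpos_of_nonneg (by norm_num) hp.le)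

lemma abs_sub_negMulLog_rpow_rpow_one_div_rpow_le {p x y : ℝ} (hp : 0 < p)
    (hx : x ∈ Icc 0 (exp (-1 / p))) (hy : y ∈ Icc 0 (exp (-1 / p))) :
    |negMulLog (x ^ p) ^ (1 / p) - negMulLog (y ^ p) ^ (1 / p)| ^ p ≤
      negMulLog (|x - y| ^ p) := by
  have hI : Icc 0 (exp (-1 / p)) ⊆ Icc 0 1 := Icc_subset_Icc_right (exp_neg_one_div_le_one hp)
  have hxy : |x - y| ≤ 1 := by
    have hx₁ := hI hx
    have hy₁ := hI hy
    exact abs_sub_le_iff.2 ⟨by linarith [hx₁.2, hy₁.1], by linarith [hx₁.1, hy₁.2]⟩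
  have hd : 0 ≤ negMulLog (|x - y| ^ p) :=
    negMulLog_nonneg (by positivity) (rpow_le_one (abs_nonneg _) hxy hp.le)
  calc _ ≤ (negMulLog (|x - y| ^ p) ^ (1 / p)) ^ p := by
        refine rpow_le_rpow (abs_nonneg _) (abs_sub_le_of_monotoneOn_of_sub_le
          (monotoneOn_negMulLog_rpow_rpow_one_div hp) (fun a ha b hb hba => ?_) hx hy) hp.le
        exact negMulLog_rpow_rpow_one_div_sub_le hp hb.1 hba (hI ha).2
    _ = negMulLog (|x - y| ^ p) := by rw [one_div, rpow_inv_rpow hd hp.ne']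

theorem modulus_estimate_for_f
    (p : ℝ) (hp : 2 < p) :
    let f : ℝ → ℝ := fun x =>
      if x = 0 then 0 else (abs x) * p ^ (1/p) * (abs (Real.log (abs x))) ^ (1/p)
    let N : ℝ → ℝ := fun s => if s ≤ 0 then 0 else -s * Real.log s
    ∀ x ∈ Icc (0:ℝ) (Real.exp (-2)), ∀ y ∈ Icc (0:ℝ) (Real.exp (-2)),
      |f x - f y| ^ p ≤ N (|x - y| ^ p) := by
  intro f N x hx y hy
  have hp0 : 0 < p := by linarith
  have hI : Icc (0 : ℝ) (exp (-2)) ⊆ Icc 0 (exp (-1 / p)) :=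
    Icc_subset_Icc_right (exp_le_exp.2 (by rw [le_div_iff₀ hp0]; linarith))
  have hf : ∀ t ∈ Icc (0 : ℝ) (exp (-2)), f t = negMulLog (t ^ p) ^ (1 / p) := by
    intro t ht
    obtain ⟨ht₀, hte⟩ := hI ht
    have ht₁ : t ≤ 1 := hte.trans (exp_neg_one_div_le_one hp0)
    rw [negMulLog_rpow_rpow_one_div hp0 ht₀ ht₁]
    rcases ht₀.eq_or_lt with rfl | ht₀
    · simp [f]
    · simp only [f, if_neg ht₀.ne', abs_of_pos ht₀, abs_of_nonpos (log_nonpos ht₀.le ht₁)]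
      ring
  have hN : ∀ s, 0 ≤ s → N s = negMulLog s := by
    intro s hs
    rcases hs.lt_or_eq with hs | rfl
    · simp [N, not_le.2 hs, negMulLog]
    · simp [N]
  rw [hf x hx, hf y hy, hN _ (by positivity)]
  exact abs_sub_negMulLog_rpow_rpow_one_div_rpow_le hp0 (hI hx) (hI hy)
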